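/- Let n, k, r be integers with k, r ≥ 2 and n ≥ 2k, and write n = pk + q with p, q integers and 1 ≤ q ≤ k. The r-uniform hypergraph H_U(n; k, r) = ((p − 1)K_k^r ∪ K_q^r) ∨_r (K_k^r)^c satisfies |E(H_U(n; k, r))| ≤ C(n, r) − C(n − k, r) + (n/k − 2)·C(k, r), with equality when k divides n, where C(a, b) denotes the binomial coefficient (equal to 0 when b > a). -/

import Mathlib

/-! The edges of `H_U(n; k, r)` are those of the `p - 1` copies of `K_k^r` and of `K_q^r`, plus
the `C(n, r) - C(n - k, r) - C(k, r)` crossing `r`-sets of the join, so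
`|E| = C(n, r) - C(n - k, r) + (p - 2) C(k, r) + C(q, r)`. As `n / k = p + q / k`, the bound reduces
to `C(q, r) ≤ (q / k) C(k, r)`, the monotonicity of `C(m, r) / m = C(m - 1, r - 1) / r` in `m`;
equality holds when `q = k`, which is the case `k ∣ n`. -/

/-- A finite hypergraph: a finite vertex set together with a finite set of
non-empty edges, each a subset of the vertex set. -/
structure FinHypergraph where
  verts : Finset ℕ
  edges : Finset (Finset ℕ)
  edge_sub : ∀ e ∈ edges, e ⊆ verts
  edge_nonempty : ∀ e ∈ edges, e.Nonempty

namespace FinHypergraph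

/-- `H` is `r`-uniform if every edge has cardinality `r`. -/
def IsUniform (H : FinHypergraph) (r : ℕ) : Prop := ∀ e ∈ H.edges, e.card = r

/-- `H'` is a subhypergraph of `H`. -/
def IsSub (H' H : FinHypergraph) : Prop := H'.verts ⊆ H.verts ∧ H'.edges ⊆ H.edges

/-- Two vertices are adjacent if some edge contains both. -/
def Adj (H : FinHypergraph) (u v : ℕ) : Prop := ∃ e ∈ H.edges, u ∈ e ∧ v ∈ e

/-- `H` is connected if every pair of vertices is joined by a path
(equivalently, a walk, i.e. is reachable via the adjacency relation). -/
def Connected (H : FinHypergraph) : Prop :=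
  ∀ u ∈ H.verts, ∀ v ∈ H.verts, Relation.ReflTransGen H.Adj u v

/-- The subhypergraph of `H` induced by the vertex set `Y`. -/
def induce (H : FinHypergraph) (Y : Finset ℕ) : FinHypergraph where
  verts := H.verts ∩ Y
  edges := H.edges.filter (fun e => e ⊆ Y)
  edge_sub := by
    intro e he
    simp only [Finset.mem_filter] at he
    exact Finset.subset_inter (H.edge_sub e he.1) he.2
  edge_nonempty := by
    intro e he
    simp only [Finset.mem_filter] at he
    exact H.edge_nonempty e he.1

/-- `X` is a vertex-cut of `H` if deleting `X` leaves a disconnected hypergraph. -/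
def IsVertexCut (H : FinHypergraph) (X : Finset ℕ) : Prop :=
  X ⊆ H.verts ∧ ¬ (H.induce (H.verts \ X)).Connected

open Classical in
/-- The vertex-connectivity of `H`: the minimum cardinality of a vertex-cut if one
exists, and `|V(H)| - 1` otherwise. -/
noncomputable def kappa (H : FinHypergraph) : ℕ :=
  if ∃ X, H.IsVertexCut X then sInf {m | ∃ X, H.IsVertexCut X ∧ X.card = m}
  else H.verts.card - 1

/-- `κ̄(H)`: the maximum vertex-connectivity over all subhypergraphs of `H`. -/
noncomputable def kappaBar (H : FinHypergraph) : ℕ :=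
  sSup {m | ∃ H' : FinHypergraph, H'.IsSub H ∧ H'.kappa = m}

/-- `H + e`: add the edge `e` (a non-empty subset of the vertices) to `H`. -/
def addEdge (H : FinHypergraph) (e : Finset ℕ) : FinHypergraph where
  verts := H.verts
  edges := if e ⊆ H.verts ∧ e.Nonempty then insert e H.edges else H.edges
  edge_sub := by
    intro f hf
    split at hf
    · rcases Finset.mem_insert.mp hf with rfl | hf
      · exact (by assumption : f ⊆ H.verts ∧ f.Nonempty).1
      · exact H.edge_sub f hf
    · exact H.edge_sub f hf
  edge_nonempty := by
    intro f hf
    split at hf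
    · rcases Finset.mem_insert.mp hf with rfl | hf
      · exact (by assumption : f ⊆ H.verts ∧ f.Nonempty).2
      · exact H.edge_nonempty f hf
    · exact H.edge_nonempty f hf

/-- `H + F`: add a set `F` of edges to `H`. -/
def addEdges (H : FinHypergraph) (F : Finset (Finset ℕ)) : FinHypergraph where
  verts := H.verts
  edges := H.edges ∪ F.filter (fun e => e ⊆ H.verts ∧ e.Nonempty)
  edge_sub := by
    intro f hf
    rcases Finset.mem_union.mp hf with hf | hf
    · exact H.edge_sub f hf
    · exact (Finset.mem_filter.mp hf).2.1
  edge_nonempty := by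
    intro f hf
    rcases Finset.mem_union.mp hf with hf | hf
    · exact H.edge_nonempty f hf
    · exact (Finset.mem_filter.mp hf).2.2

/-- `H` is vertex-`k`-maximal (as an `r`-uniform hypergraph): `κ̄(H) ≤ k`, but adding
any edge of the complement `H^c` creates a subhypergraph of connectivity at least `k + 1`. -/
def VertexKMaximal (H : FinHypergraph) (r k : ℕ) : Prop :=
  H.IsUniform r ∧ H.kappaBar ≤ k ∧
    ∀ e : Finset ℕ, e ⊆ H.verts → e.card = r → e ∉ H.edges →
      k + 1 ≤ (H.addEdge e).kappaBar

/-- The complete `r`-uniform hypergraph on the vertex set `V`. -/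
def completeHG (V : Finset ℕ) (r : ℕ) : FinHypergraph where
  verts := V
  edges := (V.powersetCard r).filter (fun e => e.Nonempty)
  edge_sub := by
    intro e he
    simp only [Finset.mem_filter, Finset.mem_powersetCard] at he
    exact he.1.1
  edge_nonempty := by
    intro e he
    exact (Finset.mem_filter.mp he).2

/-- The hypergraph on vertex set `V` with no edges. -/
def emptyHG (V : Finset ℕ) : FinHypergraph where
  verts := V
  edges := ∅
  edge_sub := by simp
  edge_nonempty := by simp

/-- The `r`-join `H₁ ∨_r H₂`: the union of `H₁` and `H₂` together with all
`r`-element subsets of `V(H₁) ∪ V(H₂)` meeting both `V(H₁)` and `V(H₂)`. -/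
def rJoin (H1 H2 : FinHypergraph) (r : ℕ) : FinHypergraph where
  verts := H1.verts ∪ H2.verts
  edges := H1.edges ∪ H2.edges ∪
    ((H1.verts ∪ H2.verts).powersetCard r).filter
      (fun e => (e ∩ H1.verts).Nonempty ∧ (e ∩ H2.verts).Nonempty)
  edge_sub := by
    intro e he
    rcases Finset.mem_union.mp he with he | he
    · rcases Finset.mem_union.mp he with he | he
      · exact (H1.edge_sub e he).trans Finset.subset_union_left
      · exact (H2.edge_sub e he).trans Finset.subset_union_right
    · exact (Finset.mem_powersetCard.mp (Finset.mem_filter.mp he).1).1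
  edge_nonempty := by
    intro e he
    rcases Finset.mem_union.mp he with he | he
    · rcases Finset.mem_union.mp he with he | he
      · exact H1.edge_nonempty e he
      · exact H2.edge_nonempty e he
    · obtain ⟨x, hx⟩ := (Finset.mem_filter.mp he).2.1
      exact ⟨x, (Finset.mem_inter.mp hx).1⟩

/-- The union of two hypergraphs. -/
def hUnion (H1 H2 : FinHypergraph) : FinHypergraph where
  verts := H1.verts ∪ H2.verts
  edges := H1.edges ∪ H2.edges
  edge_sub := by
    intro e he
    rcases Finset.mem_union.mp he with he | he
    · exact (H1.edge_sub e he).trans Finset.subset_union_left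
    · exact (H2.edge_sub e he).trans Finset.subset_union_right
  edge_nonempty := by
    intro e he
    rcases Finset.mem_union.mp he with he | he
    · exact H1.edge_nonempty e he
    · exact H2.edge_nonempty e he

/-- The union of the hypergraphs `f 0, …, f (m-1)`. -/
def unionOver (m : ℕ) (f : ℕ → FinHypergraph) : FinHypergraph where
  verts := (Finset.range m).biUnion (fun i => (f i).verts)
  edges := (Finset.range m).biUnion (fun i => (f i).edges)
  edge_sub := by
    intro e he
    obtain ⟨i, hi, hei⟩ := Finset.mem_biUnion.mp he
    exact ((f i).edge_sub e hei).trans (Finset.subset_biUnion_of_mem (fun i => (f i).verts) hi)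
  edge_nonempty := by
    intro e he
    obtain ⟨i, _, hei⟩ := Finset.mem_biUnion.mp he
    exact (f i).edge_nonempty e hei

/-- `C` is a component of `G`: a maximal connected subhypergraph. -/
def IsComponent (G C : FinHypergraph) : Prop :=
  C.IsSub G ∧ C.Connected ∧
    ∀ C' : FinHypergraph, C'.IsSub G → C'.Connected → C.IsSub C' → C' = C

/-- `(S, H₁, H₂)` is a separation triple of `H`: `S` is a minimum vertex-cut,
`H₁ = H[S ∪ V(C₁)]` and `H₂ = H[S ∪ V(C₂)]`, where `C₁` is a component of `H - S`
and `C₂ = H - (S ∪ V(C₁))`. -/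
def IsSeparationTriple (H : FinHypergraph) (S : Finset ℕ) (H1 H2 : FinHypergraph) : Prop :=
  H.IsVertexCut S ∧ (∀ X : Finset ℕ, H.IsVertexCut X → S.card ≤ X.card) ∧
    ∃ C1 : FinHypergraph, IsComponent (H.induce (H.verts \ S)) C1 ∧
      H1 = H.induce (S ∪ C1.verts) ∧
      H2 = H.induce (S ∪ (H.verts \ (S ∪ C1.verts)))

end FinHypergraph

/-- The hypergraph `H_U(n;k,r) = ((p-1)K_k^r ∪ K_q^r) ∨_r (K_k^r)^c`, built from
pairwise disjoint vertex sets `A 0, …, A (p-2)` (each of size `k`), `B` (of size `q`)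
and `C` (of size `k`). -/
def HU (p r : ℕ) (A : ℕ → Finset ℕ) (B C : Finset ℕ) : FinHypergraph :=
  FinHypergraph.rJoin
    (FinHypergraph.hUnion
      (FinHypergraph.unionOver (p - 1) (fun i => FinHypergraph.completeHG (A i) r))
      (FinHypergraph.completeHG B r))
    (FinHypergraph.emptyHG C) r

open Finset

theorem Finset.disjoint_powersetCard {α : Type*} {s t : Finset α} {r : ℕ} (hr : 0 < r)
    (hst : Disjoint s t) :
    Disjoint (s.powersetCard r) (t.powersetCard r) := by
  refine Finset.disjoint_left.mpr fun e hes het => ?_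
  rw [mem_powersetCard] at hes het
  obtain ⟨x, hx⟩ := card_pos.mp (hes.2 ▸ hr)
  exact Finset.disjoint_left.mp hst (hes.1 hx) (het.1 hx)

theorem Finset.card_powersetCard_meeting_both_add {α : Type*} [DecidableEq α] {s t : Finset α}
    {r : ℕ} (hr : 0 < r) (hst : Disjoint s t) :
    #{e ∈ (s ∪ t).powersetCard r | (e ∩ s).Nonempty ∧ (e ∩ t).Nonempty}
      + ((#s).choose r + (#t).choose r) = (#s + #t).choose r := by
  have hcompl : {e ∈ (s ∪ t).powersetCard r | ¬((e ∩ s).Nonempty ∧ (e ∩ t).Nonempty)}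
      = s.powersetCard r ∪ t.powersetCard r := by
    ext e
    simp only [mem_filter, mem_union, mem_powersetCard, not_and_or, not_nonempty_iff_eq_empty,
      ← disjoint_iff_inter_eq_empty]
    constructor
    · rintro ⟨⟨hsub, hcard⟩, hs | ht⟩
      · exact .inr ⟨hs.left_le_of_le_sup_left hsub, hcard⟩
      · exact .inl ⟨ht.left_le_of_le_sup_right hsub, hcard⟩
    · rintro (⟨hsub, hcard⟩ | ⟨hsub, hcard⟩)
      · exact ⟨⟨hsub.trans subset_union_left, hcard⟩, .inr (hst.mono_left hsub)⟩
      · exact ⟨⟨hsub.trans subset_union_right, hcard⟩, .inl (hst.symm.mono_left hsub)⟩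
  rw [← card_union_of_disjoint hst, ← card_powersetCard, ← card_powersetCard,
    ← card_powersetCard, ← card_union_of_disjoint (disjoint_powersetCard hr hst), ← hcompl,
    card_filter_add_card_filter_not]

namespace FinHypergraph

theorem disjoint_edges_of_disjoint_verts {H₁ H₂ : FinHypergraph}
    (h : Disjoint H₁.verts H₂.verts) : Disjoint H₁.edges H₂.edges := by
  refine Finset.disjoint_left.mpr fun e he₁ he₂ => ?_
  obtain ⟨x, hx⟩ := H₁.edge_nonempty e he₁
  exact Finset.disjoint_left.mp h (H₁.edge_sub e he₁ hx) (H₂.edge_sub e he₂ hx)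

theorem card_edges_hUnion {H₁ H₂ : FinHypergraph} (h : Disjoint H₁.verts H₂.verts) :
    #(hUnion H₁ H₂).edges = #H₁.edges + #H₂.edges :=
  card_union_of_disjoint (disjoint_edges_of_disjoint_verts h)

theorem card_verts_hUnion {H₁ H₂ : FinHypergraph} (h : Disjoint H₁.verts H₂.verts) :
    #(hUnion H₁ H₂).verts = #H₁.verts + #H₂.verts :=
  card_union_of_disjoint h

theorem card_edges_unionOver {m : ℕ} {f : ℕ → FinHypergraph}
    (h : ∀ i < m, ∀ j < m, i ≠ j → Disjoint (f i).verts (f j).verts) :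
    #(unionOver m f).edges = ∑ i ∈ range m, #(f i).edges :=
  card_biUnion fun i hi j hj hij => disjoint_edges_of_disjoint_verts <|
    h i (mem_range.mp hi) j (mem_range.mp hj) hij

theorem card_verts_unionOver {m : ℕ} {f : ℕ → FinHypergraph}
    (h : ∀ i < m, ∀ j < m, i ≠ j → Disjoint (f i).verts (f j).verts) :
    #(unionOver m f).verts = ∑ i ∈ range m, #(f i).verts :=
  card_biUnion fun i hi j hj hij => h i (mem_range.mp hi) j (mem_range.mp hj) hij

@[simp] theorem verts_completeHG (V : Finset ℕ) (r : ℕ) : (completeHG V r).verts = V := rfl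

@[simp] theorem verts_emptyHG (V : Finset ℕ) : (emptyHG V).verts = V := rfl

@[simp] theorem edges_emptyHG (V : Finset ℕ) : (emptyHG V).edges = ∅ := rfl

theorem card_edges_completeHG (V : Finset ℕ) {r : ℕ} (hr : 0 < r) :
    #(completeHG V r).edges = (#V).choose r :=
  (congrArg card <| filter_true_of_mem fun _ he =>
    card_pos.mp <| (mem_powersetCard.mp he).2 ▸ hr).trans (card_powersetCard r V)

theorem card_edges_rJoin {H₁ H₂ : FinHypergraph} {r : ℕ} (hr : 0 < r)
    (h : Disjoint H₁.verts H₂.verts) :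
    #(rJoin H₁ H₂ r).edges + ((#H₁.verts).choose r + (#H₂.verts).choose r)
      = #H₁.edges + #H₂.edges + (#H₁.verts + #H₂.verts).choose r := by
  have hcross : Disjoint (H₁.edges ∪ H₂.edges) {e ∈ (H₁.verts ∪ H₂.verts).powersetCard r |
      (e ∩ H₁.verts).Nonempty ∧ (e ∩ H₂.verts).Nonempty} := by
    refine Finset.disjoint_left.mpr fun e he hcr => ?_
    obtain ⟨⟨x, hx₁⟩, ⟨y, hy₂⟩⟩ := (mem_filter.mp hcr).2
    rw [mem_inter] at hx₁ hy₂
    rcases mem_union.mp he with he | he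
    · exact Finset.disjoint_left.mp h (H₁.edge_sub e he hy₂.1) hy₂.2
    · exact Finset.disjoint_left.mp h hx₁.2 (H₂.edge_sub e he hx₁.1)
  rw [rJoin, card_union_of_disjoint hcross, card_union_of_disjoint
    (disjoint_edges_of_disjoint_verts h), add_assoc, card_powersetCard_meeting_both_add hr h]

end FinHypergraph

open FinHypergraph in
theorem card_edges_HU {p k q r : ℕ} (hr : 0 < r) {A : ℕ → Finset ℕ} {B C : Finset ℕ}
    (hA : ∀ i < p - 1, #(A i) = k) (hB : #B = q) (hC : #C = k)
    (hAA : ∀ i < p - 1, ∀ j < p - 1, i ≠ j → Disjoint (A i) (A j))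
    (hABd : ∀ i < p - 1, Disjoint (A i) B) (hACd : ∀ i < p - 1, Disjoint (A i) C)
    (hBC : Disjoint B C) :
    #(HU p r A B C).edges + (((p - 1) * k + q).choose r + k.choose r)
      = ((p - 1) * k + q + k).choose r + ((p - 1) * k.choose r + q.choose r) := by
  set K := unionOver (p - 1) fun i => completeHG (A i) r
  have hKB : Disjoint K.verts B :=
    (disjoint_biUnion_left _ _ _).mpr fun i hi => hABd i (mem_range.mp hi)
  have hKC : Disjoint K.verts C :=
    (disjoint_biUnion_left _ _ _).mpr fun i hi => hACd i (mem_range.mp hi)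
  have hK_verts : #K.verts = (p - 1) * k := by
    rw [card_verts_unionOver (f := fun i => completeHG (A i) r) hAA]
    simp only [verts_completeHG]
    rw [sum_const_nat fun i hi => hA i (mem_range.mp hi), card_range]
  have hK_edges : #K.edges = (p - 1) * k.choose r := by
    rw [card_edges_unionOver hAA, sum_const_nat fun i hi => by
      rw [card_edges_completeHG _ hr, hA i (mem_range.mp hi)], card_range]
  have hjoin := card_edges_rJoin hr (H₁ := hUnion K (completeHG B r)) (H₂ := emptyHG C)
    (disjoint_union_left.mpr ⟨hKC, hBC⟩)
  rw [card_verts_hUnion hKB, card_edges_hUnion hKB, card_edges_completeHG _ hr, hK_verts,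
    hK_edges, verts_completeHG, hB, verts_emptyHG, edges_emptyHG, hC, card_empty,
    add_zero] at hjoin
  exact hjoin.trans (add_comm _ _)

theorem Nat.mul_choose_le_mul_choose {q k r : ℕ} (hr : 0 < r) (hqk : q ≤ k) :
    k * q.choose r ≤ q * k.choose r := by
  obtain ⟨s, rfl⟩ : ∃ s, r = s + 1 := ⟨r - 1, by omega⟩
  rcases q with _ | a
  · simp
  obtain ⟨b, rfl⟩ := Nat.exists_eq_add_of_le hqk
  refine Nat.le_of_mul_le_mul_right (c := s + 1) ?_ (Nat.succ_pos s)
  calc (a + 1 + b) * (a + 1).choose (s + 1) * (s + 1)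
      = (a + 1 + b) * ((a + 1) * a.choose s) := by rw [add_one_mul_choose_eq, mul_assoc]
    _ ≤ (a + 1 + b) * ((a + 1) * (a + b).choose s) := by
      gcongr
      omega
    _ = (a + 1) * (a + 1 + b).choose (s + 1) * (s + 1) := by
      rw [mul_assoc, show a + 1 + b = a + b + 1 by omega, ← add_one_mul_choose_eq]
      ring

theorem Nat.cast_choose_le_div_mul_choose {q k r : ℕ} (hr : 0 < r) (hqk : q ≤ k) :
    (q.choose r : ℝ) ≤ q / k * k.choose r := by
  rcases k.eq_zero_or_pos with rfl | hk
  · simp [Nat.le_zero.mp hqk, Nat.choose_eq_zero_of_lt hr]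
  rw [div_mul_eq_mul_div, le_div_iff₀ (by exact_mod_cast hk), mul_comm]
  exact_mod_cast Nat.mul_choose_le_mul_choose hr hqk

theorem stmt_11_general (n k r p q : ℕ) (hr : 2 ≤ r) (hn : 2 * k ≤ n)
    (hq1 : 1 ≤ q) (hqk : q ≤ k) (hpq : n = p * k + q)
    (A : ℕ → Finset ℕ) (B C : Finset ℕ)
    (hA : ∀ i < p - 1, (A i).card = k) (hB : B.card = q) (hC : C.card = k)
    (hAA : ∀ i < p - 1, ∀ j < p - 1, i ≠ j → Disjoint (A i) (A j))
    (hABd : ∀ i < p - 1, Disjoint (A i) B) (hACd : ∀ i < p - 1, Disjoint (A i) C)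
    (hBC : Disjoint B C) :
    (((HU p r A B C).edges.card : ℝ) ≤
        (n.choose r : ℝ) - ((n - k).choose r : ℝ)
          + ((n : ℝ) / (k : ℝ) - 2) * (k.choose r : ℝ)) ∧
    (k ∣ n →
      ((HU p r A B C).edges.card : ℝ) =
        (n.choose r : ℝ) - ((n - k).choose r : ℝ)
          + ((n : ℝ) / (k : ℝ) - 2) * (k.choose r : ℝ)) := by
  have hr0 : 0 < r := by omega
  have hk : (k : ℝ) ≠ 0 := by norm_cast; omega
  have hp : 0 < p := Nat.pos_of_ne_zero <| by rintro rfl; omega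
  have hcount := card_edges_HU hr0 hA hB hC hAA hABd hACd hBC
  rw [Nat.sub_one_mul, show p * k - k + q = n - k by have := Nat.le_mul_of_pos_left k hp; omega,
    show n - k + k = n by omega] at hcount
  have hE : ((HU p r A B C).edges.card : ℝ) = n.choose r - (n - k).choose r
      + ((n : ℝ) / k - 2) * k.choose r + (q.choose r - q / k * k.choose r) := by
    have hnk : (n : ℝ) / k = p + q / k := by
      rw [hpq]; push_cast; field_simp
    have hcountR := congrArg (Nat.cast : ℕ → ℝ) hcount
    push_cast [Nat.cast_sub hp] at hcountR
    rw [hnk]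
    linear_combination hcountR
  refine ⟨?_, fun hkn => ?_⟩
  · linarith [Nat.cast_choose_le_div_mul_choose hr0 hqk]
  · obtain rfl : q = k := le_antisymm hqk <| Nat.le_of_dvd (by omega) <|
      (Nat.dvd_add_right (dvd_mul_left k p)).mp (hpq ▸ hkn)
    rw [hE, div_self hk, one_mul, sub_self, add_zero]

/-- For `k, r ≥ 2`, `n ≥ 2k` and `n = pk + q` with `1 ≤ q ≤ k`, the
hypergraph `H_U(n;k,r)` satisfies `|E| ≤ C(n,r) - C(n-k,r) + (n/k - 2)·C(k,r)`,
with equality when `k ∣ n`. -/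
theorem stmt_11 (n k r p q : ℕ) (hk : 2 ≤ k) (hr : 2 ≤ r) (hn : 2 * k ≤ n)
    (hq1 : 1 ≤ q) (hqk : q ≤ k) (hpq : n = p * k + q)
    (A : ℕ → Finset ℕ) (B C : Finset ℕ)
    (hA : ∀ i < p - 1, (A i).card = k) (hB : B.card = q) (hC : C.card = k)
    (hAA : ∀ i < p - 1, ∀ j < p - 1, i ≠ j → Disjoint (A i) (A j))
    (hABd : ∀ i < p - 1, Disjoint (A i) B) (hACd : ∀ i < p - 1, Disjoint (A i) C)
    (hBC : Disjoint B C) :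
    (((HU p r A B C).edges.card : ℝ) ≤
        (n.choose r : ℝ) - ((n - k).choose r : ℝ)
          + ((n : ℝ) / (k : ℝ) - 2) * (k.choose r : ℝ)) ∧
    (k ∣ n →
      ((HU p r A B C).edges.card : ℝ) =
        (n.choose r : ℝ) - ((n - k).choose r : ℝ)
          + ((n : ℝ) / (k : ℝ) - 2) * (k.choose r : ℝ)) :=
  stmt_11_general n k r p q hr hn hq1 hqk hpq A B C hA hB hC hAA hABd hACd hBC
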